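/- Let X₁, X₂, … be i.i.d. random variables with P(X₁ = 2) = 1/2, P(X₁ = −1) = 1/4 and P(X₁ = −3) = 1/4, and let S_t be the associated random walk. Then the expected number of crossings of level 2 satisfies E L_2 > 1/2. -/

import Mathlib

open MeasureTheory ProbabilityTheory Filter

noncomputable section

variable {Ω : Type*} [MeasurableSpace Ω]

/-- Conditional expectation of `f` given the event `A`. -/
def cexp (μ : Measure Ω) (A : Set Ω) (f : Ω → ℝ) : ℝ :=
  (∫ ω in A, f ω ∂μ) / (μ A).toReal

/-- Partial sums of the steps: `pS X t = X 0 + ⋯ + X (t-1)`, i.e. the walk `S_t`, where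
`X i` stands for the step `X_{i+1}` of the paper. -/
def pS (X : ℕ → Ω → ℝ) : ℕ → Ω → ℝ
  | 0 => fun _ => 0
  | (t + 1) => fun ω => pS X t ω + X t ω

/-- The stopping time `τ`: the first time `t > 1` with `S_t ≤ 0` if `X₁ > 0`, and `1`
otherwise. -/
def tauRW (X : ℕ → Ω → ℝ) (ω : Ω) : ℕ∞ :=
  if 0 < X 0 ω then sInf {n : ℕ∞ | ∃ t : ℕ, n = (t : ℕ∞) ∧ 1 < t ∧ pS X t ω ≤ 0}
  else 1

/-- The number of level-crossings `L_α`: the number of `t ∈ {1, …, τ}` with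
`S_{t-1} < α` and `S_t ≥ α`. -/
def nCross (X : ℕ → Ω → ℝ) (α : ℝ) (ω : Ω) : ℕ :=
  Set.ncard {t : ℕ | 1 ≤ t ∧ (t : ℕ∞) ≤ tauRW X ω ∧ pS X (t - 1) ω < α ∧ α ≤ pS X t ω}

/-- The expected number of level-crossings `E L_α`. -/
def EL (μ : Measure Ω) (X : ℕ → Ω → ℝ) (α : ℝ) : ℝ :=
  ∫ ω, (nCross X α ω : ℝ) ∂μ

/-- The value `S_τ` of the walk at the stopping time (junk value `0` if `τ = ∞`). -/
def Stau (X : ℕ → Ω → ℝ) (ω : Ω) : ℝ :=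
  pS X (tauRW X ω).toNat ω

/-- The pair `(t_i(α), τ_i(α))` of the `i`-th crossing time and the `i`-th descent time
(junk values given by `sInf ∅ = 0` when they do not exist). -/
def cdTimes (X : ℕ → Ω → ℝ) (α : ℝ) : ℕ → Ω → ℕ × ℕ
  | 0 => fun _ => (0, 0)
  | (i + 1) => fun ω =>
      let t := sInf {t : ℕ | (cdTimes X α i ω).2 < t ∧ (t : ℕ∞) ≤ tauRW X ω ∧ α ≤ pS X t ω}
      (t, sInf {s : ℕ | t < s ∧ pS X s ω < α})

/-- The event `𝔄_i(α)`: the `i`-th crossing of the level `α` occurs during `[0, τ]`. -/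
def crossEv (X : ℕ → Ω → ℝ) (α : ℝ) : ℕ → Set Ω
  | 0 => Set.univ
  | (i + 1) => crossEv X α i ∩
      {ω | ∃ t : ℕ, (cdTimes X α i ω).2 < t ∧ (t : ℕ∞) ≤ tauRW X ω ∧ α ≤ pS X t ω}

/-- Assumption 1 of the paper at the level `α`: `P(𝔄₂(α)) > 0`,
`E[S_{t₁(α)-1} ∣ 𝔄₁(α)] > 0`, `E[S_{τ₁(α)} ∣ 𝔄₁(α)] > 0`,
`E[S_{t₂(α)-1} ∣ 𝔄₂(α)] = E[S_{t₁(α)-1} ∣ 𝔄₁(α)]` and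
`E[S_{τ₂(α)} ∣ 𝔄₂(α)] = E[S_{τ₁(α)} ∣ 𝔄₁(α)]`. -/
def Assumption1 (μ : Measure Ω) (X : ℕ → Ω → ℝ) (α : ℝ) : Prop :=
  0 < μ (crossEv X α 2) ∧
  0 < cexp μ (crossEv X α 1) (fun ω => pS X ((cdTimes X α 1 ω).1 - 1) ω) ∧
  0 < cexp μ (crossEv X α 1) (fun ω => pS X ((cdTimes X α 1 ω).2) ω) ∧
  cexp μ (crossEv X α 2) (fun ω => pS X ((cdTimes X α 2 ω).1 - 1) ω)
    = cexp μ (crossEv X α 1) (fun ω => pS X ((cdTimes X α 1 ω).1 - 1) ω) ∧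
  cexp μ (crossEv X α 2) (fun ω => pS X ((cdTimes X α 2 ω).2) ω)
    = cexp μ (crossEv X α 1) (fun ω => pS X ((cdTimes X α 1 ω).2) ω)

/-!
Every crossing of level 2 after time 1 is preceded by a visit of the walk to 1 strictly before
`τ`: the walk is integer-valued and positive there. Between two such visits the walk must step
`+2`, since a step of `-1` or `-3` from 1 ends the excursion. The step taken at the `k`-th visit
is independent of the past, so `P(at least k + 1 visits) ≤ 2⁻ᵏ`; hence `L₂` is a.s. finite and
integrable. Finally `L₂ ≥ 𝟙{X₁ = 2} + 𝟙{X₁ = 2, X₂ = -1, X₃ = 2}`, and the expectation of the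
right-hand side is `1/2 + 1/16`.
-/

open scoped ENNReal

namespace Nat

variable {p : ℕ → Prop} [DecidablePred p]

lemma count_le_encard (n : ℕ) : (count p n : ℕ∞) ≤ {k | p k}.encard := by
  rw [count_eq_card_filter_range, ← Set.encard_coe_eq_coe_finsetCard]
  exact Set.encard_le_encard fun k hk => (Finset.mem_filter.1 hk).2

lemma exists_count_eq_of_lt_encard {k : ℕ} (h : (k : ℕ∞) < {n | p n}.encard) :
    ∃ n, p n ∧ count p n = k := by
  have hk : ∀ hf : (Set.ofPred p).Finite, k < hf.toFinset.card := fun hf => by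
    rwa [hf.encard_eq_coe_toFinset_card, Nat.cast_lt] at h
  exact ⟨nth p k, nth_mem k hk, count_nth hk⟩

lemma exists_lt_count_eq_of_lt_count {k m : ℕ} (h : k < count p m) :
    ∃ n < m, p n ∧ count p n = k := by
  obtain ⟨n, hn, hcount⟩ := exists_count_eq_of_lt_encard
    (lt_of_lt_of_le (Nat.cast_lt.2 h) (count_le_encard m))
  exact ⟨n, lt_of_count_lt_count (hcount ▸ h), hn, hcount⟩

end Nat

section NatValued

variable {Ω : Type*} [MeasurableSpace Ω] {μ : Measure Ω} {f : Ω → ℕ}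

lemma lintegral_natCast_eq_tsum_measure_lt (hf : Measurable f) :
    ∫⁻ ω, (f ω : ℝ≥0∞) ∂μ = ∑' k : ℕ, μ {ω | k < f ω} := by
  have hmeas : ∀ k : ℕ, MeasurableSet {ω | k < f ω} := fun k => hf measurableSet_Ioi
  have hpt : ∀ ω, (f ω : ℝ≥0∞) = ∑' k : ℕ, {ω | k < f ω}.indicator 1 ω := fun ω => by
    rw [tsum_eq_sum (s := Finset.range (f ω)) fun k hk => by simpa using hk]
    simp [Set.indicator_apply, Finset.sum_boole, Finset.filter_true_of_mem]
  rw [lintegral_congr hpt,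
    lintegral_tsum fun k => (measurable_one.indicator (hmeas k)).aemeasurable]
  exact tsum_congr fun k => lintegral_indicator_one (hmeas k)

lemma integrable_natCast_of_tsum_measure_lt_ne_top (hf : Measurable f)
    (h : ∑' k : ℕ, μ {ω | k < f ω} ≠ ∞) : Integrable (fun ω => (f ω : ℝ)) μ := by
  simpa using integrable_toReal_of_lintegral_ne_top (μ := μ)
    (Measurable.of_discrete.comp hf).aemeasurable
    ((lintegral_natCast_eq_tsum_measure_lt hf).trans_ne h)

end NatValued

section Past

variable {Ω β : Type*} [mβ : MeasurableSpace β] {X : ℕ → Ω → β}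

abbrev pastMeasurableSpace (X : ℕ → Ω → β) (n : ℕ) : MeasurableSpace Ω :=
  ⨆ i ∈ Set.Iio n, mβ.comap (X i)

lemma measurable_pastMeasurableSpace {i n : ℕ} (h : i < n) :
    Measurable[pastMeasurableSpace X n] (X i) :=
  Measurable.of_comap_le (le_iSup₂ (f := fun i (_ : i ∈ Set.Iio n) => mβ.comap (X i)) i h)

lemma pastMeasurableSpace_mono : Monotone (pastMeasurableSpace (mβ := mβ) X) :=
  fun _ _ hnm => biSup_mono fun _ hi => lt_of_lt_of_le hi hnm

lemma pastMeasurableSpace_le [mΩ : MeasurableSpace Ω] (hX : ∀ i, Measurable (X i)) (n : ℕ) :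
    pastMeasurableSpace X n ≤ mΩ :=
  iSup₂_le fun i _ => (hX i).comap_le

lemma ProbabilityTheory.iIndepFun.measure_inter_preimage_eq_mul_of_past [MeasurableSpace Ω]
    {μ : Measure Ω} (hX : ∀ i, Measurable (X i)) (hindep : iIndepFun X μ) {n : ℕ} {A : Set Ω}
    (hA : MeasurableSet[pastMeasurableSpace X n] A) {B : Set β} (hB : MeasurableSet B) :
    μ (A ∩ X n ⁻¹' B) = μ A * μ (X n ⁻¹' B) := by
  have hpast := indep_iSup_of_disjoint (fun i => (hX i).comap_le)
    ((iIndepFun_iff_iIndep _ _ μ).1 hindep) (S := Set.Iio n) (T := {n}) (by simp)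
  refine (Indep_iff _ _ μ).1 hpast _ _ hA ?_
  exact le_iSup₂ (f := fun i (_ : i ∈ ({n} : Set ℕ)) => mβ.comap (X i)) n rfl _ ⟨B, hB, rfl⟩

end Past

section Hits

variable {Ω : Type*}

open Classical in
def kthHitAt (V : ℕ → Set Ω) (k n : ℕ) : Set Ω :=
  V n ∩ {ω | Nat.count (fun t => ω ∈ V t) n = k}

lemma measurableSet_kthHitAt [mΩ : MeasurableSpace Ω] {V : ℕ → Set Ω} {n : ℕ}
    (hV : ∀ t ≤ n, MeasurableSet (V t)) (k : ℕ) : MeasurableSet (kthHitAt V k n) := by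
  classical
  have hcount : Measurable fun ω => Nat.count (fun t => ω ∈ V t) n := by
    simp_rw [Nat.count_eq_card_filter_range, Finset.card_filter]
    exact Finset.measurable_sum _ fun t ht =>
      Measurable.ite (hV t (Finset.mem_range.1 ht).le) measurable_const measurable_const
  exact (hV n le_rfl).inter (hcount (measurableSet_singleton k))

open Function in
lemma pairwise_disjoint_kthHitAt (V : ℕ → Set Ω) (k : ℕ) :
    Pairwise (Disjoint on kthHitAt V k) := by
  classical
  suffices ∀ n m, n < m → Disjoint (kthHitAt V k n) (kthHitAt V k m) from
    fun n m hnm => hnm.lt_or_gt.elim (this n m) fun h => (this m n h).symm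
  refine fun n m hnm => Set.disjoint_left.2 fun ω ⟨hn, hcn⟩ ⟨_, hcm⟩ => ?_
  exact (Nat.count_strict_mono (p := fun t => ω ∈ V t) hn hnm).ne (hcn.trans hcm.symm)

end Hits

section GeometricHits

variable {Ω β : Type*} [MeasurableSpace Ω] [MeasurableSpace β] {μ : Measure Ω}
  {X : ℕ → Ω → β} {V : ℕ → Set Ω} {B : Set β} {p : ℝ≥0∞}

lemma measure_iUnion_kthHitAt_succ_le (hX : ∀ i, Measurable (X i)) (hindep : iIndepFun X μ)
    (hV : ∀ n, MeasurableSet[pastMeasurableSpace X n] (V n)) (hB : MeasurableSet B)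
    (hBp : ∀ n, μ (X n ⁻¹' B) ≤ p)
    (hstep : ∀ᵐ ω ∂μ, ∀ n m, n < m → ω ∈ V n → ω ∈ V m → X n ω ∈ B) (k : ℕ) :
    μ (⋃ n, kthHitAt V (k + 1) n) ≤ μ (⋃ n, kthHitAt V k n) * p := by
  have hpast : ∀ n, MeasurableSet[pastMeasurableSpace X n] (kthHitAt V k n) := fun n =>
    measurableSet_kthHitAt (mΩ := pastMeasurableSpace X n)
      (fun t ht => pastMeasurableSpace_mono ht _ (hV t)) k
  have hsub : (⋃ n, kthHitAt V (k + 1) n) ≤ᵐ[μ] ⋃ n, kthHitAt V k n ∩ X n ⁻¹' B := by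
    filter_upwards [hstep] with ω hω hmem
    classical
    obtain ⟨m, hm, hcount⟩ := Set.mem_iUnion.1 hmem
    obtain ⟨n, hnm, hn, hcount'⟩ :=
      Nat.exists_lt_count_eq_of_lt_count (hcount.symm ▸ Nat.lt_add_one k)
    exact Set.mem_iUnion.2 ⟨n, ⟨hn, hcount'⟩, hω n m hnm hn hm⟩
  calc μ (⋃ n, kthHitAt V (k + 1) n) ≤ μ (⋃ n, kthHitAt V k n ∩ X n ⁻¹' B) :=
        measure_mono_ae hsub
    _ ≤ ∑' n, μ (kthHitAt V k n ∩ X n ⁻¹' B) := measure_iUnion_le _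
    _ = ∑' n, μ (kthHitAt V k n) * μ (X n ⁻¹' B) := by
        simp_rw [hindep.measure_inter_preimage_eq_mul_of_past hX (hpast _) hB]
    _ ≤ ∑' n, μ (kthHitAt V k n) * p := by gcongr with n; exact hBp n
    _ = μ (⋃ n, kthHitAt V k n) * p := by
        rw [ENNReal.tsum_mul_right, measure_iUnion (pairwise_disjoint_kthHitAt V k)
          fun n => pastMeasurableSpace_le hX n _ (hpast n)]

lemma measure_lt_encard_setOf_mem_le_pow [IsProbabilityMeasure μ]
    (hX : ∀ i, Measurable (X i)) (hindep : iIndepFun X μ)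
    (hV : ∀ n, MeasurableSet[pastMeasurableSpace X n] (V n)) (hB : MeasurableSet B)
    (hBp : ∀ n, μ (X n ⁻¹' B) ≤ p)
    (hstep : ∀ᵐ ω ∂μ, ∀ n m, n < m → ω ∈ V n → ω ∈ V m → X n ω ∈ B) (k : ℕ) :
    μ {ω | (k : ℕ∞) < {n | ω ∈ V n}.encard} ≤ p ^ k := by
  have hpow : ∀ j, μ (⋃ n, kthHitAt V j n) ≤ p ^ j := by
    intro j
    induction j with
    | zero => simpa using prob_le_one
    | succ j ih =>
      calc μ (⋃ n, kthHitAt V (j + 1) n) ≤ μ (⋃ n, kthHitAt V j n) * p :=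
            measure_iUnion_kthHitAt_succ_le hX hindep hV hB hBp hstep j
        _ ≤ p ^ (j + 1) := by rw [pow_succ]; gcongr
  refine le_trans (measure_mono fun ω hω => ?_) (hpow k)
  classical
  obtain ⟨n, hn, hcount⟩ := Nat.exists_count_eq_of_lt_encard hω
  exact Set.mem_iUnion.2 ⟨n, hn, hcount⟩

end GeometricHits

section Walk

variable {Ω : Type*} {X : ℕ → Ω → ℝ} {ω : Ω}

@[simp] lemma pS_zero : pS X 0 ω = 0 := rfl

lemma pS_succ (t : ℕ) : pS X (t + 1) ω = pS X t ω + X t ω := rfl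

@[simp] lemma pS_one : pS X 1 ω = X 0 ω := zero_add _

lemma natCast_lt_tauRW_iff {n : ℕ} :
    (n : ℕ∞) < tauRW X ω ↔ ∀ s ∈ Finset.Icc 1 n, 0 < pS X s ω := by
  simp only [Finset.mem_Icc, and_imp]
  unfold tauRW
  split_ifs with hX
  · rw [← ENat.add_one_le_iff (ENat.natCast_ne_top n), le_sInf_iff]
    constructor
    · intro h s hs1 hsn
      rcases hs1.eq_or_lt with rfl | hs1
      · simpa using hX
      · by_contra hle
        have := h s ⟨s, rfl, hs1, not_lt.1 hle⟩
        norm_cast at this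
        omega
    · rintro h _ ⟨s, rfl, hs1, hs⟩
      by_contra hlt
      norm_cast at hlt
      exact (h s hs1.le (by omega)).not_ge hs
  · constructor
    · intro h s hs1 hsn
      norm_cast at h
      omega
    · intro h
      by_contra hn
      have : 1 ≤ n := by norm_cast at hn; omega
      exact hX (by simpa using h 1 le_rfl this)

lemma pS_pos_of_lt_tauRW {s : ℕ} (hs : 1 ≤ s) (h : (s : ℕ∞) < tauRW X ω) : 0 < pS X s ω :=
  natCast_lt_tauRW_iff.1 h s (Finset.mem_Icc.2 ⟨hs, le_rfl⟩)

def crossingTimes (X : ℕ → Ω → ℝ) (α : ℝ) (ω : Ω) : Set ℕ :=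
  {t : ℕ | 1 ≤ t ∧ (t : ℕ∞) ≤ tauRW X ω ∧ pS X (t - 1) ω < α ∧ α ≤ pS X t ω}

lemma nCross_eq_ncard (α : ℝ) : nCross X α ω = (crossingTimes X α ω).ncard := rfl

lemma zero_notMem_crossingTimes {α : ℝ} : 0 ∉ crossingTimes X α ω := fun h => by
  simpa using h.1

lemma add_one_mem_crossingTimes_iff {α : ℝ} {n : ℕ} :
    n + 1 ∈ crossingTimes X α ω ↔
      (n : ℕ∞) < tauRW X ω ∧ pS X n ω < α ∧ α ≤ pS X (n + 1) ω := by
  simp [crossingTimes, ENat.add_one_le_iff (ENat.natCast_ne_top n)]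

def visitTimes (X : ℕ → Ω → ℝ) (ω : Ω) : Set ℕ :=
  {n : ℕ | pS X n ω = 1 ∧ (n : ℕ∞) < tauRW X ω}

lemma pS_mem_range_intCast (hZ : ∀ i, X i ω ∈ Set.range ((↑) : ℤ → ℝ)) (t : ℕ) :
    pS X t ω ∈ Set.range ((↑) : ℤ → ℝ) := by
  induction t with
  | zero => exact ⟨0, by simp⟩
  | succ t ih =>
    obtain ⟨a, ha⟩ := ih
    obtain ⟨b, hb⟩ := hZ t
    exact ⟨a + b, by rw [pS_succ, ← ha, ← hb, Int.cast_add]⟩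

lemma mem_visitTimes_of_add_one_mem_crossingTimes (hZ : ∀ i, X i ω ∈ Set.range ((↑) : ℤ → ℝ))
    {n : ℕ} (h : n + 1 ∈ crossingTimes X 2 ω) (hn : 1 ≤ n) : n ∈ visitTimes X ω := by
  obtain ⟨hτ, hlt, -⟩ := add_one_mem_crossingTimes_iff.1 h
  have hpos := pS_pos_of_lt_tauRW hn hτ
  obtain ⟨z, hz⟩ := pS_mem_range_intCast hZ n
  rw [← hz] at hpos hlt
  have : z = 1 := by
    have : (0 : ℤ) < z := by exact_mod_cast hpos
    have : z < 2 := by exact_mod_cast hlt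
    omega
  exact ⟨by simp [← hz, this], hτ⟩

lemma encard_crossingTimes_le (hZ : ∀ i, X i ω ∈ Set.range ((↑) : ℤ → ℝ)) :
    (crossingTimes X 2 ω).encard ≤ (visitTimes X ω).encard + 1 := by
  have hsub : crossingTimes X 2 ω ⊆ insert 1 ((· + 1) '' visitTimes X ω) := by
    rintro (_ | n) ht
    · exact absurd ht zero_notMem_crossingTimes
    rcases Nat.eq_zero_or_pos n with rfl | hn
    · exact Set.mem_insert _ _
    · exact Or.inr ⟨n, mem_visitTimes_of_add_one_mem_crossingTimes hZ ht hn, rfl⟩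
  calc (crossingTimes X 2 ω).encard ≤ (insert 1 ((· + 1) '' visitTimes X ω)).encard :=
        Set.encard_le_encard hsub
    _ ≤ ((· + 1) '' visitTimes X ω).encard + 1 := Set.encard_insert_le _ _
    _ ≤ (visitTimes X ω).encard + 1 := add_le_add_left (Set.encard_image_le _ _) 1

lemma step_eq_two_of_mem_visitTimes (hX : ∀ i, X i ω = 2 ∨ X i ω ≤ -1) {n m : ℕ}
    (hn : n ∈ visitTimes X ω) (hm : m ∈ visitTimes X ω) (hnm : n < m) : X n ω = 2 := by
  refine (hX n).resolve_right fun hle => ?_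
  have hτ : ((n + 1 : ℕ) : ℕ∞) < tauRW X ω := lt_of_le_of_lt (by exact_mod_cast hnm) hm.2
  have := pS_pos_of_lt_tauRW (by omega) hτ
  rw [pS_succ, hn.1] at this
  linarith

lemma one_mem_crossingTimes (h0 : X 0 ω = 2) : 1 ∈ crossingTimes X 2 ω :=
  add_one_mem_crossingTimes_iff.2 ⟨natCast_lt_tauRW_iff.2 (by simp), by simp, by simp [h0]⟩

lemma three_mem_crossingTimes (h0 : X 0 ω = 2) (h1 : X 1 ω = -1) (h2 : X 2 ω = 2) :
    3 ∈ crossingTimes X 2 ω := by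
  have hS2 : pS X 2 ω = 1 := by rw [pS_succ, pS_one, h0, h1]; norm_num
  refine add_one_mem_crossingTimes_iff.2 ⟨natCast_lt_tauRW_iff.2 fun s hs => ?_, by simp [hS2], ?_⟩
  · obtain rfl | rfl : s = 1 ∨ s = 2 := by simp only [Finset.mem_Icc] at hs; omega
    · simp [h0]
    · simp [hS2]
  · rw [pS_succ, hS2, h2]; norm_num

lemma indicator_add_indicator_le_nCross (hfin : (crossingTimes X 2 ω).Finite) :
    {ω | X 0 ω = 2}.indicator 1 ω + {ω | X 0 ω = 2 ∧ X 1 ω = -1 ∧ X 2 ω = 2}.indicator 1 ω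
      ≤ (nCross X 2 ω : ℝ) := by
  rw [nCross_eq_ncard]
  by_cases hB : X 0 ω = 2 ∧ X 1 ω = -1 ∧ X 2 ω = 2
  · obtain ⟨h0, h1, h2⟩ := hB
    have hsub : ({1, 3} : Set ℕ) ⊆ crossingTimes X 2 ω := Set.insert_subset_iff.2
      ⟨one_mem_crossingTimes h0, Set.singleton_subset_iff.2 (three_mem_crossingTimes h0 h1 h2)⟩
    have := Set.ncard_le_ncard hsub hfin
    rw [Set.ncard_pair (by norm_num)] at this
    simp only [Set.indicator_of_mem (show ω ∈ {ω | X 0 ω = 2} from h0),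
      Set.indicator_of_mem (show ω ∈ {ω | X 0 ω = 2 ∧ X 1 ω = -1 ∧ X 2 ω = 2} from ⟨h0, h1, h2⟩)]
    norm_num
    exact_mod_cast this
  · rw [Set.indicator_of_notMem (show ω ∉ {ω | X 0 ω = 2 ∧ X 1 ω = -1 ∧ X 2 ω = 2} from hB),
      add_zero]
    by_cases h0 : X 0 ω = 2
    · rw [Set.indicator_of_mem (show ω ∈ {ω | X 0 ω = 2} from h0)]
      exact Nat.one_le_cast.2 ((Set.ncard_pos hfin).2 ⟨1, one_mem_crossingTimes h0⟩)
    · rw [Set.indicator_of_notMem (show ω ∉ {ω | X 0 ω = 2} from h0)]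
      positivity

end Walk

section WalkMeasurability

variable {Ω : Type*} [mΩ : MeasurableSpace Ω] {X : ℕ → Ω → ℝ}

lemma measurable_pS {t : ℕ} (hX : ∀ i < t, Measurable (X i)) : Measurable (pS X t) := by
  induction t with
  | zero => exact measurable_const
  | succ t ih => exact (ih fun i hi => hX i (by omega)).add (hX t (by omega))

lemma measurableSet_natCast_lt_tauRW {n : ℕ} (hX : ∀ i < n, Measurable (X i)) :
    MeasurableSet {ω | (n : ℕ∞) < tauRW X ω} := by
  simp only [natCast_lt_tauRW_iff, Set.ofPred_forall]
  refine .iInter fun s => .iInter fun hs => measurableSet_lt measurable_const ?_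
  exact measurable_pS fun i hi => hX i (by have := (Finset.mem_Icc.1 hs).2; omega)

lemma measurableSet_mem_visitTimes {n : ℕ} (hX : ∀ i < n, Measurable (X i)) :
    MeasurableSet {ω | n ∈ visitTimes X ω} :=
  (measurable_pS hX (measurableSet_singleton 1)).inter (measurableSet_natCast_lt_tauRW hX)

lemma measurableSet_mem_crossingTimes (hX : ∀ i, Measurable (X i)) (α : ℝ) (t : ℕ) :
    MeasurableSet {ω | t ∈ crossingTimes X α ω} := by
  rcases t with _ | n
  · simp [zero_notMem_crossingTimes]
  · simp only [add_one_mem_crossingTimes_iff, Set.ofPred_and]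
    exact (measurableSet_natCast_lt_tauRW fun i _ => hX i).inter
      ((measurableSet_lt (measurable_pS fun i _ => hX i) measurable_const).inter
        (measurableSet_le measurable_const (measurable_pS fun i _ => hX i)))

lemma measurable_nCross (hX : ∀ i, Measurable (X i)) (α : ℝ) : Measurable (nCross X α) :=
  measurable_ncard.comp <| measurable_set_iff.2 fun t =>
    measurableSet_setOfPred.1 (measurableSet_mem_crossingTimes hX α t)

end WalkMeasurability

section StepsTwoNegOneNegThree

variable {Ω : Type*} [MeasurableSpace Ω] {μ : Measure Ω}

lemma ae_forall_mem_of_identDistrib {β : Type*} [MeasurableSpace β] {X : ℕ → Ω → β}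
    (hident : ∀ i, IdentDistrib (X i) (X 0) μ μ) {s : Set β} (hs : MeasurableSet s)
    (h : ∀ᵐ ω ∂μ, X 0 ω ∈ s) : ∀ᵐ ω ∂μ, ∀ i, X i ω ∈ s :=
  ae_all_iff.2 fun i => (hident i).symm.ae_mem_snd hs h

lemma eq_two_or_le_neg_one_of_mem {x : ℝ} (hx : x ∈ ({2, -1, -3} : Set ℝ)) : x = 2 ∨ x ≤ -1 := by
  simp only [Set.mem_insert_iff, Set.mem_singleton_iff] at hx
  rcases hx with rfl | rfl | rfl <;> norm_num

lemma mem_range_intCast_of_mem {x : ℝ} (hx : x ∈ ({2, -1, -3} : Set ℝ)) :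
    x ∈ Set.range ((↑) : ℤ → ℝ) := by
  simp only [Set.mem_insert_iff, Set.mem_singleton_iff] at hx
  rcases hx with rfl | rfl | rfl
  exacts [⟨2, by norm_num⟩, ⟨-1, by norm_num⟩, ⟨-3, by norm_num⟩]

variable {X : ℕ → Ω → ℝ}

lemma measure_two_neg_one_two (hindep : iIndepFun X μ)
    (hident : ∀ i, IdentDistrib (X i) (X 0) μ μ) (h1 : μ {ω | X 0 ω = 2} = 1 / 2)
    (h2 : μ {ω | X 0 ω = -1} = 1 / 4) :
    μ {ω | X 0 ω = 2 ∧ X 1 ω = -1 ∧ X 2 ω = 2} = 1 / 16 := by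
  let x : ℕ → ℝ := fun i => if i = 1 then -1 else 2
  have hset : {ω | X 0 ω = 2 ∧ X 1 ω = -1 ∧ X 2 ω = 2} = ⋂ i ∈ Finset.range 3, X i ⁻¹' {x i} := by
    ext ω
    simp [x, Finset.range_add_one]
    tauto
  have hmarg : ∀ i, μ (X i ⁻¹' {x i}) = μ (X 0 ⁻¹' {x i}) := fun i =>
    (hident i).measure_mem_eq (measurableSet_singleton _)
  rw [hset, hindep.meas_biInter fun i _ => ⟨{x i}, measurableSet_singleton _, rfl⟩]
  simp only [Finset.prod_range_succ, Finset.prod_range_zero, one_mul, hmarg]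
  change μ {ω | X 0 ω = 2} * μ {ω | X 0 ω = -1} * μ {ω | X 0 ω = 2} = 1 / 16
  rw [h1, h2, ← ENNReal.toReal_eq_toReal_iff' (by finiteness) (by simp)]
  simp
  norm_num

variable [IsProbabilityMeasure μ]

lemma ae_mem_two_neg_one_neg_three (hX : Measurable (X 0))
    (h1 : μ {ω | X 0 ω = 2} = 1 / 2) (h2 : μ {ω | X 0 ω = -1} = 1 / 4)
    (h3 : μ {ω | X 0 ω = -3} = 1 / 4) :
    ∀ᵐ ω ∂μ, X 0 ω ∈ ({2, -1, -3} : Set ℝ) := by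
  have hsum := sum_measure_preimage_singleton (μ := μ) ({2, -1, -3} : Finset ℝ)
    fun y _ => hX (measurableSet_singleton y)
  rw [Finset.sum_insert (by norm_num), Finset.sum_pair (by norm_num)] at hsum
  push_cast at hsum
  change ∀ᵐ ω ∂μ, ω ∈ X 0 ⁻¹' {2, -1, -3}
  rw [ae_mem_iff_measure_eq (hX (by measurability)).nullMeasurableSet, measure_univ, ← hsum]
  change μ {ω | X 0 ω = 2} + (μ {ω | X 0 ω = -1} + μ {ω | X 0 ω = -3}) = 1
  rw [h1, h2, h3, ← add_assoc, ← ENNReal.toReal_eq_toReal_iff' (by simp) (by simp)]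
  simp [ENNReal.toReal_add]
  norm_num

lemma measure_lt_encard_visitTimes_le (hX : ∀ i, Measurable (X i)) (hindep : iIndepFun X μ)
    (hident : ∀ i, IdentDistrib (X i) (X 0) μ μ) (h1 : μ {ω | X 0 ω = 2} = 1 / 2)
    (hsupp : ∀ᵐ ω ∂μ, ∀ i, X i ω ∈ ({2, -1, -3} : Set ℝ)) (k : ℕ) :
    μ {ω | (k : ℕ∞) < (visitTimes X ω).encard} ≤ (1 / 2) ^ k := by
  refine measure_lt_encard_setOf_mem_le_pow (V := fun n => {ω | n ∈ visitTimes X ω})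
    (B := {2}) hX hindep
    (fun n => measurableSet_mem_visitTimes (mΩ := pastMeasurableSpace X n)
      fun _ hi => measurable_pastMeasurableSpace hi)
    (measurableSet_singleton 2)
    (fun n => ((hident n).measure_mem_eq (measurableSet_singleton 2)).trans_le h1.le) ?_ k
  filter_upwards [hsupp] with ω hω n m hnm hn hm
  exact step_eq_two_of_mem_visitTimes (fun i => eq_two_or_le_neg_one_of_mem (hω i)) hn hm hnm

lemma ae_finite_crossingTimes (hX : ∀ i, Measurable (X i)) (hindep : iIndepFun X μ)
    (hident : ∀ i, IdentDistrib (X i) (X 0) μ μ) (h1 : μ {ω | X 0 ω = 2} = 1 / 2)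
    (hsupp : ∀ᵐ ω ∂μ, ∀ i, X i ω ∈ ({2, -1, -3} : Set ℝ)) :
    ∀ᵐ ω ∂μ, (crossingTimes X 2 ω).Finite := by
  have hvisit : ∀ᵐ ω ∂μ, (visitTimes X ω).encard < ⊤ := by
    refine ae_iff.2 (le_antisymm (ge_of_tendsto' (ENNReal.tendsto_pow_atTop_nhds_zero_of_lt_one
      (by norm_num : (1 / 2 : ℝ≥0∞) < 1)) fun k => ?_) zero_le)
    refine (measure_mono fun ω hω => ?_).trans
      (measure_lt_encard_visitTimes_le hX hindep hident h1 hsupp k)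
    exact (ENat.natCast_lt_top k).trans_le (not_lt.1 hω)
  filter_upwards [hsupp, hvisit] with ω hω hfin
  rw [← Set.encard_lt_top_iff]
  exact (encard_crossingTimes_le fun i => mem_range_intCast_of_mem (hω i)).trans_lt
    (ENat.add_lt_top.2 ⟨hfin, ENat.one_lt_top⟩)

lemma measure_add_one_lt_nCross_le (hX : ∀ i, Measurable (X i)) (hindep : iIndepFun X μ)
    (hident : ∀ i, IdentDistrib (X i) (X 0) μ μ) (h1 : μ {ω | X 0 ω = 2} = 1 / 2)
    (hsupp : ∀ᵐ ω ∂μ, ∀ i, X i ω ∈ ({2, -1, -3} : Set ℝ)) (k : ℕ) :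
    μ {ω | k + 1 < nCross X 2 ω} ≤ (1 / 2) ^ k := by
  refine (measure_mono_ae ?_).trans (measure_lt_encard_visitTimes_le hX hindep hident h1 hsupp k)
  filter_upwards [hsupp] with ω hω hlt
  have hcross : ((k + 1 : ℕ) : ℕ∞) < (crossingTimes X 2 ω).encard :=
    (Nat.cast_lt.2 hlt).trans_le (ENat.natCast_toNat_le_self _)
  push_cast at hcross
  exact lt_of_add_lt_add_right
    (hcross.trans_le (encard_crossingTimes_le fun i => mem_range_intCast_of_mem (hω i)))

lemma integrable_nCross (hX : ∀ i, Measurable (X i)) (hindep : iIndepFun X μ)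
    (hident : ∀ i, IdentDistrib (X i) (X 0) μ μ) (h1 : μ {ω | X 0 ω = 2} = 1 / 2)
    (hsupp : ∀ᵐ ω ∂μ, ∀ i, X i ω ∈ ({2, -1, -3} : Set ℝ)) :
    Integrable (fun ω => (nCross X 2 ω : ℝ)) μ := by
  refine integrable_natCast_of_tsum_measure_lt_ne_top (measurable_nCross hX 2) ?_
  rw [tsum_eq_zero_add' ENNReal.summable]
  refine ENNReal.add_ne_top.2 ⟨measure_ne_top _ _, ne_top_of_le_ne_top ?_
    (ENNReal.tsum_le_tsum (measure_add_one_lt_nCross_le hX hindep hident h1 hsupp))⟩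
  simp [ENNReal.tsum_geometric, ENNReal.one_sub_inv_two]

end StepsTwoNegOneNegThree

/-- For the random walk whose step takes the value `2` with probability
`1/2`, the value `-1` with probability `1/4` and the value `-3` with probability `1/4`,
one has `E L_2 > 1/2`. -/
theorem stmt14 (μ : Measure Ω) [IsProbabilityMeasure μ]
    (X : ℕ → Ω → ℝ) (hmeas : ∀ i, Measurable (X i))
    (hindep : iIndepFun X μ)
    (hident : ∀ i, IdentDistrib (X i) (X 0) μ μ)
    (h1 : μ {ω | X 0 ω = 2} = 1 / 2) (h2 : μ {ω | X 0 ω = -1} = 1 / 4)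
    (h3 : μ {ω | X 0 ω = -3} = 1 / 4) :
    1 / 2 < EL μ X 2 := by
  have hsupp := ae_forall_mem_of_identDistrib hident (by measurability)
    (ae_mem_two_neg_one_neg_three (hmeas 0) h1 h2 h3)
  set A := {ω | X 0 ω = 2}
  set B := {ω | X 0 ω = 2 ∧ X 1 ω = -1 ∧ X 2 ω = 2}
  have hA : MeasurableSet A := hmeas 0 (measurableSet_singleton 2)
  have hB : MeasurableSet B :=
    hA.inter ((hmeas 1 (measurableSet_singleton _)).inter (hmeas 2 (measurableSet_singleton _)))
  have hlower : ∫ ω, (A.indicator 1 ω + B.indicator 1 ω) ∂μ ≤ EL μ X 2 :=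
    integral_mono_ae (((integrable_const 1).indicator hA).add ((integrable_const 1).indicator hB))
      (integrable_nCross hmeas hindep hident h1 hsupp) <| by
        filter_upwards [ae_finite_crossingTimes hmeas hindep hident h1 hsupp] with ω hω
          using indicator_add_indicator_le_nCross hω
  rw [integral_add ((integrable_const 1).indicator hA) ((integrable_const 1).indicator hB),
    integral_indicator_one hA, integral_indicator_one hB, measureReal_def, measureReal_def, h1,
    measure_two_neg_one_two hindep hident h1 h2] at hlower
  norm_num at hlower
  linarith
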